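/- If a finite meet-semilattice S contains exactly one upper-bounded two-element antichain, then S is a quasi-tree semilattice and its nucleus is the four-element boolean lattice. -/

import Mathlib

def IsMeetCong {α : Type*} [SemilatticeInf α] (s : Setoid α) : Prop :=
  ∀ a b c d : α, s.r a b → s.r c d → s.r (a ⊓ c) (b ⊓ d)

noncomputable def numCong (α : Type*) [SemilatticeInf α] : ℕ :=
  Nat.card {s : Setoid α // IsMeetCong s}

def IsUbta {α : Type*} [SemilatticeInf α] [OrderBot α] (x y : α) : Prop :=
  x ≠ ⊥ ∧ y ≠ ⊥ ∧ ¬ x ≤ y ∧ ¬ y ≤ x ∧ ∃ z, x ≤ z ∧ y ≤ z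

def treeCong (α : Type*) [SemilatticeInf α] [OrderBot α] : Setoid α :=
  sInf {s : Setoid α | IsMeetCong s ∧
    ∀ a b v : α, IsUbta a b → IsLUB {a, b} v → s.r (a ⊓ b) v}

def IsNucleus {α : Type*} [SemilatticeInf α] [OrderBot α] (X : Set α) : Prop :=
  (∃ x ∈ X, ∃ y ∈ X, x ≠ y) ∧
  (∀ x ∈ X, ∀ y, y ∈ X ↔ (treeCong α).r x y) ∧
  (∀ a b : α, (treeCong α).r a b → a ≠ b → a ∈ X)

def IsQuasiTree (α : Type*) [SemilatticeInf α] [OrderBot α] : Prop :=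
  ∃ X : Set α, IsNucleus X

def IsB4Nucleus {α : Type*} [SemilatticeInf α] (X : Set α) : Prop :=
  ∃ u a b v : α, X = {u, a, b, v} ∧ ¬ a ≤ b ∧ ¬ b ≤ a ∧
    a ⊓ b = u ∧ IsLUB {a, b} v

/-!
Let `u = a ⊓ b` and `v = a ⊔ b` (which exists by finiteness). Uniqueness of the ubta forces every
element below `v` to be `≤ u`, or one of `a`, `b`, `v`; so `[u, v] = {u, a, b, v}` and every
element below `v` is comparable with `u`. The latter makes the partition of `α` with the single
nonsingleton block `[u, v]` a meet congruence, and since every ubta generates the pair `(u, v)`,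
this congruence is the tree congruence.
-/

theorem exists_isLUB_of_bddAbove {α : Type*} [SemilatticeInf α] [Finite α] {s : Set α}
    (hs : BddAbove s) : ∃ v, IsLUB s v := by
  have hfin := (upperBounds s).toFinite
  have hne : hfin.toFinset.Nonempty := hfin.toFinset_nonempty.mpr hs
  refine ⟨hfin.toFinset.inf' hne id, isGLB_upperBounds.mp ?_⟩
  simpa only [Set.Finite.coe_toFinset] using Finset.isGLB_inf' hne

def Setoid.collapse {α : Type*} (X : Set α) : Setoid α where
  r x y := x = y ∨ x ∈ X ∧ y ∈ X
  iseqv :=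
    { refl := fun _ => Or.inl rfl
      symm := fun
        | .inl h => .inl h.symm
        | .inr ⟨hx, hy⟩ => .inr ⟨hy, hx⟩
      trans := fun
        | .inl rfl, h => h
        | .inr ⟨hx, hy⟩, .inl rfl => .inr ⟨hx, hy⟩
        | .inr ⟨hx, _⟩, .inr ⟨_, hz⟩ => .inr ⟨hx, hz⟩ }

namespace Setoid

variable {α : Type*} {X : Set α}

theorem collapse_rel {x y : α} : (collapse X).r x y ↔ x = y ∨ x ∈ X ∧ y ∈ X := Iff.rfl

theorem collapse_le {s : Setoid α} (h : ∀ x ∈ X, ∀ y ∈ X, s.r x y) : collapse X ≤ s := by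
  rintro x y (rfl | ⟨hx, hy⟩)
  · exact s.refl' x
  · exact h x hx y hy

end Setoid

section MeetCong

variable {α : Type*} [SemilatticeInf α]

open Setoid

theorem isMeetCong_collapse {X : Set α}
    (hX : ∀ c, (∃ d, ∀ x ∈ X, x ⊓ c = d) ∨ ∀ x ∈ X, x ⊓ c ∈ X) : IsMeetCong (collapse X) := by
  have inf_mem : ∀ x ∈ X, ∀ y ∈ X, x ⊓ y ∈ X := by
    intro x hx y hy
    rcases hX y with ⟨d, hd⟩ | hmaps
    · rw [hd x hx, ← hd y hy, inf_idem]
      exact hy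
    · exact hmaps x hx
  have translate : ∀ c, ∀ x ∈ X, ∀ y ∈ X, (collapse X).r (x ⊓ c) (y ⊓ c) := by
    intro c x hx y hy
    rcases hX c with ⟨d, hd⟩ | hmaps
    · exact .inl ((hd x hx).trans (hd y hy).symm)
    · exact .inr ⟨hmaps x hx, hmaps y hy⟩
  rintro p q c d (rfl | ⟨hp, hq⟩) (rfl | ⟨hc, hd⟩)
  · exact (collapse X).refl' _
  · simpa only [inf_comm p] using translate p c hc d hd
  · exact translate c p hp q hq
  · exact .inr ⟨inf_mem p hp c hc, inf_mem q hq d hd⟩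

theorem isMeetCong_collapse_Icc {u v : α} (hcomp : ∀ w ≤ v, w ≤ u ∨ u ≤ w) :
    IsMeetCong (collapse (Set.Icc u v)) := by
  refine isMeetCong_collapse fun c => ?_
  have below_v : ∀ x ≤ v, x ⊓ c = x ⊓ (v ⊓ c) := fun x hx => by
    rw [← inf_assoc, inf_of_le_left hx]
  rcases hcomp (v ⊓ c) inf_le_left with hw | hw
  · refine .inl ⟨v ⊓ c, fun x hx => ?_⟩
    rw [below_v x hx.2]
    exact inf_of_le_right (hw.trans hx.1)
  · refine .inr fun x hx => ⟨le_inf hx.1 (hw.trans inf_le_right), inf_le_left.trans hx.2⟩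

theorem IsMeetCong.rel_of_le_of_le {s : Setoid α} (hs : IsMeetCong s) {x y z : α}
    (hxy : s.r x y) (hxz : x ≤ z) (hzy : z ≤ y) : s.r x z := by
  simpa only [inf_of_le_left hxz, inf_of_le_right hzy] using hs x y z z hxy (s.refl' z)

theorem IsMeetCong.rel_of_mem_Icc {s : Setoid α} (hs : IsMeetCong s) {u v x y : α}
    (huv : s.r u v) (hx : x ∈ Set.Icc u v) (hy : y ∈ Set.Icc u v) : s.r x y :=
  s.trans' (s.symm' (hs.rel_of_le_of_le huv hx.1 hx.2)) (hs.rel_of_le_of_le huv hy.1 hy.2)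

end MeetCong

section TreeCong

variable {α : Type*} [SemilatticeInf α] [OrderBot α]

theorem treeCong_le {s : Setoid α} (hs : IsMeetCong s)
    (hgen : ∀ a b v : α, IsUbta a b → IsLUB {a, b} v → s.r (a ⊓ b) v) : treeCong α ≤ s :=
  sInf_le ⟨hs, hgen⟩

theorem isMeetCong_treeCong : IsMeetCong (treeCong α) :=
  fun _ _ _ _ hab hcd s hs => hs.1 _ _ _ _ (hab s hs) (hcd s hs)

theorem treeCong_rel_inf_of_isLUB {a b v : α} (hab : IsUbta a b) (hv : IsLUB {a, b} v) :
    (treeCong α).r (a ⊓ b) v :=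
  fun _ hs => hs.2 a b v hab hv

theorem isNucleus_of_treeCong_eq_collapse {X : Set α} (hX : X.Nontrivial)
    (h : treeCong α = Setoid.collapse X) : IsNucleus X := by
  refine ⟨hX, fun x hx y => ?_, fun p q hpq hne => ?_⟩
  · rw [h, Setoid.collapse_rel]
    exact ⟨fun hy => .inr ⟨hx, hy⟩, fun | .inl rfl => hx | .inr ⟨_, hy⟩ => hy⟩
  · rw [h, Setoid.collapse_rel] at hpq
    exact hpq.resolve_left hne |>.1

end TreeCong

section UniqueUbta

variable {α : Type*} [SemilatticeInf α] [OrderBot α] {a b v : α}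
  (huniq : ∀ x y : α, IsUbta x y → ({x, y} : Set α) = {a, b})
include huniq

theorem le_or_le_or_eq_of_uniqueUbta {t w : α} (ht : t ≠ ⊥) (htv : t ≤ v) (hw : w ≠ ⊥)
    (hwv : w ≤ v) : w ≤ t ∨ t ≤ w ∨ w = a ∨ w = b := by
  by_contra! h
  have hmem : w ∈ ({a, b} : Set α) :=
    huniq w t ⟨hw, ht, h.1, h.2.1, v, hwv, htv⟩ ▸ Set.mem_insert w {t}
  exact hmem.elim h.2.2.1 h.2.2.2

theorem le_inf_or_eq_of_le_of_uniqueUbta (hab : IsUbta a b) (hv : IsLUB {a, b} v) {w : α}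
    (hwv : w ≤ v) : w ≤ a ⊓ b ∨ w = a ∨ w = b ∨ w = v := by
  obtain ⟨ha, hb, hnab, hnba, -⟩ := hab
  have hav : a ≤ v := hv.1 (Set.mem_insert a _)
  have hbv : b ≤ v := hv.1 (Set.mem_insert_of_mem a rfl)
  rcases eq_or_ne w ⊥ with rfl | hw
  · exact .inl bot_le
  have compare_b := le_or_le_or_eq_of_uniqueUbta huniq hb hbv hw hwv
  rcases le_or_le_or_eq_of_uniqueUbta huniq ha hav hw hwv with hwa | haw | h | h
  · rcases compare_b with hwb | hbw | h | h
    · exact .inl (le_inf hwa hwb)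
    · exact absurd (hbw.trans hwa) hnba
    · exact .inr (.inl h)
    · exact .inr (.inr (.inl h))
  · rcases compare_b with hwb | hbw | h | h
    · exact absurd (haw.trans hwb) hnab
    · exact .inr (.inr (.inr (le_antisymm hwv (hv.2 (by simp [upperBounds, haw, hbw])))))
    · exact .inr (.inl h)
    · exact .inr (.inr (.inl h))
  · exact .inr (.inl h)
  · exact .inr (.inr (.inl h))

theorem le_or_inf_le_of_uniqueUbta (hab : IsUbta a b) (hv : IsLUB {a, b} v) {w : α}
    (hwv : w ≤ v) : w ≤ a ⊓ b ∨ a ⊓ b ≤ w := by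
  rcases le_inf_or_eq_of_le_of_uniqueUbta huniq hab hv hwv with h | rfl | rfl | rfl
  · exact .inl h
  · exact .inr inf_le_left
  · exact .inr inf_le_right
  · exact .inr (inf_le_left.trans (hv.1 (Set.mem_insert a _)))

theorem Icc_inf_eq_of_uniqueUbta (hab : IsUbta a b) (hv : IsLUB {a, b} v) :
    Set.Icc (a ⊓ b) v = {a ⊓ b, a, b, v} := by
  have hav : a ≤ v := hv.1 (Set.mem_insert a _)
  have hbv : b ≤ v := hv.1 (Set.mem_insert_of_mem a rfl)
  ext w
  constructor
  · rintro ⟨huw, hwv⟩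
    rcases le_inf_or_eq_of_le_of_uniqueUbta huniq hab hv hwv with h | h | h | h
    · exact .inl (le_antisymm h huw)
    all_goals simp [h]
  · rintro (rfl | rfl | rfl | rfl)
    · exact ⟨le_rfl, inf_le_left.trans hav⟩
    · exact ⟨inf_le_left, hav⟩
    · exact ⟨inf_le_right, hbv⟩
    · exact ⟨inf_le_left.trans hav, le_rfl⟩

theorem treeCong_eq_collapse_Icc_of_uniqueUbta (hab : IsUbta a b) (hv : IsLUB {a, b} v) :
    treeCong α = Setoid.collapse (Set.Icc (a ⊓ b) v) := by
  refine le_antisymm (treeCong_le (isMeetCong_collapse_Icc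
    fun w => le_or_inf_le_of_uniqueUbta huniq hab hv) fun x y w hxy hw => ?_)
    (Setoid.collapse_le fun x hx y hy =>
      isMeetCong_treeCong.rel_of_mem_Icc (treeCong_rel_inf_of_isLUB hab hv) hx hy)
  have hxy_inf : x ⊓ y = a ⊓ b := by
    obtain ⟨rfl, rfl⟩ | ⟨rfl, rfl⟩ := Set.pair_eq_pair_iff.mp (huniq x y hxy)
    exacts [rfl, inf_comm _ _]
  rw [huniq x y hxy] at hw
  rw [hxy_inf, hw.unique hv, Setoid.collapse_rel, Icc_inf_eq_of_uniqueUbta huniq hab hv]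
  simp

end UniqueUbta

/-- A finite meet-semilattice with exactly one upper-bounded two-element
antichain is a quasi-tree semilattice whose nucleus is the four-element
boolean lattice. -/
theorem oneUbta_nucleus {α : Type*} [SemilatticeInf α] [OrderBot α] [Fintype α]
    (a b : α) (hab : IsUbta a b)
    (huniq : ∀ x y : α, IsUbta x y → ({x, y} : Set α) = {a, b}) :
    ∃ X : Set α, IsNucleus X ∧ IsB4Nucleus X := by
  obtain ⟨v, hv⟩ : ∃ v, IsLUB {a, b} v := by
    obtain ⟨-, -, -, -, z, haz, hbz⟩ := hab
    exact exists_isLUB_of_bddAbove ⟨z, by simp [upperBounds, haz, hbz]⟩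
  have hIcc := Icc_inf_eq_of_uniqueUbta huniq hab hv
  have hne : (Set.Icc (a ⊓ b) v).Nontrivial := by
    rw [hIcc]
    exact ⟨a, by simp, b, by simp, fun h => hab.2.2.1 h.le⟩
  exact ⟨_, isNucleus_of_treeCong_eq_collapse hne
      (treeCong_eq_collapse_Icc_of_uniqueUbta huniq hab hv),
    a ⊓ b, a, b, v, hIcc, hab.2.2.1, hab.2.2.2.1, rfl, hv⟩
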